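/- For any two adjacent vertices x and y in a graph G, b(G) ≤ deg(x) + deg(y) − 1. -/

import Mathlib

/-!
Delete every edge at `x` or at `y`: there are `deg x + deg y - 1` of them, since `xy` is counted
twice. Both ends become isolated, so every dominating set `D` of the new graph contains `x` and
`y`. Then `D \ {x}` dominates `G`: `y ∈ D` dominates `x` in `G`, and every other vertex is
dominated by the same vertex of `D` as before. Hence the domination number has gone up.
-/

open SimpleGraph

variable {V : Type*}

/-- `S` is a dominating set of `G`: every vertex is in `S` or has a neighbor in `S`. -/
def SimpleGraph.IsDomSet (G : SimpleGraph V) (S : Finset V) : Prop :=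
  ∀ v : V, v ∈ S ∨ ∃ u ∈ S, G.Adj u v

/-- The domination number of a finite graph. -/
noncomputable def SimpleGraph.domNum [Fintype V] (G : SimpleGraph V) : ℕ :=
  sInf {n | ∃ S : Finset V, S.card = n ∧ G.IsDomSet S}

/-- The bondage number: the minimum size of a set of edges of `G` whose removal
increases the domination number. -/
noncomputable def SimpleGraph.bondageNum [Fintype V] (G : SimpleGraph V) : ℕ :=
  sInf {n | ∃ B : Finset (Sym2 V), B.card = n ∧ ↑B ⊆ G.edgeSet ∧
    G.domNum < (G.deleteEdges ↑B).domNum}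

namespace SimpleGraph

open Finset

lemma IsDomSet.mem_of_forall_not_adj {G : SimpleGraph V} {S : Finset V} (hS : G.IsDomSet S)
    {v : V} (hv : ∀ u, ¬G.Adj v u) : v ∈ S :=
  (hS v).resolve_right fun ⟨u, _, huv⟩ => hv u huv.symm

lemma IsDomSet.erase_of_forall_not_adj [DecidableEq V] {G H : SimpleGraph V} {S : Finset V}
    (hS : H.IsDomSet S) (hHG : H ≤ G) {x y : V} (hx : ∀ u, ¬H.Adj x u) (hy : y ∈ S)
    (hyx : G.Adj y x) : G.IsDomSet (S.erase x) := by
  intro v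
  obtain rfl | hvx := eq_or_ne v x
  · exact Or.inr ⟨y, mem_erase.2 ⟨hyx.ne, hy⟩, hyx⟩
  obtain hvS | ⟨u, huS, huv⟩ := hS v
  · exact Or.inl (mem_erase.2 ⟨hvx, hvS⟩)
  · have hux : u ≠ x := by rintro rfl; exact hx v huv
    exact Or.inr ⟨u, mem_erase.2 ⟨hux, huS⟩, hHG huv⟩

lemma not_adj_deleteEdges_of_incidenceSet_subset {G : SimpleGraph V} {s : Set (Sym2 V)} {x : V}
    (hs : G.incidenceSet x ⊆ s) (u : V) : ¬(G.deleteEdges s).Adj x u := fun hxu =>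
  have ⟨hG, hns⟩ := (deleteEdges_adj ..).1 hxu
  hns (hs (G.mk'_mem_incidenceSet_left_iff.2 hG))

section Fintype

variable [Fintype V]

lemma exists_isDomSet_card_eq_domNum (G : SimpleGraph V) :
    ∃ S : Finset V, #S = G.domNum ∧ G.IsDomSet S :=
  Nat.sInf_mem (s := {n | ∃ S : Finset V, #S = n ∧ G.IsDomSet S})
    ⟨#(univ : Finset V), univ, rfl, fun v => Or.inl (mem_univ v)⟩

lemma domNum_le_card {G : SimpleGraph V} {S : Finset V} (hS : G.IsDomSet S) : G.domNum ≤ #S :=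
  Nat.sInf_le ⟨S, rfl, hS⟩

lemma domNum_lt_of_forall_not_adj {G H : SimpleGraph V} (hHG : H ≤ G) {x y : V} (hxy : G.Adj x y)
    (hx : ∀ u, ¬H.Adj x u) (hy : ∀ u, ¬H.Adj y u) : G.domNum < H.domNum := by
  classical
  obtain ⟨D, hD, hDdom⟩ := H.exists_isDomSet_card_eq_domNum
  have hxD : x ∈ D := hDdom.mem_of_forall_not_adj hx
  calc G.domNum ≤ #(D.erase x) :=
        domNum_le_card (hDdom.erase_of_forall_not_adj hHG hx (hDdom.mem_of_forall_not_adj hy)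
          hxy.symm)
    _ < #D := card_erase_lt_of_mem hxD
    _ = H.domNum := hD

lemma bondageNum_le_card {G : SimpleGraph V} {B : Finset (Sym2 V)} (hB : ↑B ⊆ G.edgeSet)
    (hlt : G.domNum < (G.deleteEdges ↑B).domNum) : G.bondageNum ≤ B.card :=
  Nat.sInf_le ⟨B, rfl, hB, hlt⟩

lemma card_incidenceFinset_union_of_adj [DecidableEq V] {G : SimpleGraph V} [DecidableRel G.Adj]
    {x y : V} (hxy : G.Adj x y) :
    #(G.incidenceFinset x ∪ G.incidenceFinset y) = G.degree x + G.degree y - 1 := by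
  have hinter : G.incidenceFinset x ∩ G.incidenceFinset y = {s(x, y)} := by
    rw [← coe_inj, coe_inter, coe_incidenceFinset, coe_incidenceFinset, coe_singleton,
      G.incidenceSet_inter_incidenceSet_of_adj hxy]
  have := card_union_add_card_inter (G.incidenceFinset x) (G.incidenceFinset y)
  rw [hinter, card_singleton, card_incidenceFinset_eq_degree, card_incidenceFinset_eq_degree]
    at this
  omega

end Fintype

end SimpleGraph

theorem bondage_le_degree_add_degree_sub_one [Fintype V]
    (G : SimpleGraph V) [DecidableRel G.Adj] {x y : V} (hxy : G.Adj x y) :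
    G.bondageNum ≤ G.degree x + G.degree y - 1 := by
  classical
  set B := G.incidenceFinset x ∪ G.incidenceFinset y
  have hB : (B : Set (Sym2 V)) = G.incidenceSet x ∪ G.incidenceSet y := by
    rw [Finset.coe_union, coe_incidenceFinset, coe_incidenceFinset]
  have hlt : G.domNum < (G.deleteEdges ↑B).domNum :=
    domNum_lt_of_forall_not_adj (G.deleteEdges_le _) hxy
      (not_adj_deleteEdges_of_incidenceSet_subset (hB ▸ Set.subset_union_left))
      (not_adj_deleteEdges_of_incidenceSet_subset (hB ▸ Set.subset_union_right))
  calc G.bondageNum ≤ B.card :=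
        bondageNum_le_card (hB ▸ Set.union_subset (G.incidenceSet_subset x)
          (G.incidenceSet_subset y)) hlt
    _ = G.degree x + G.degree y - 1 := card_incidenceFinset_union_of_adj hxy
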